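/- Let χ* be a primitive Dirichlet character modulo c*, let m be a positive integer, and let s ∈ ℂ with Re(s) > 1. Then the series I(s, χ*, c*, m) = ∑_{ℓ≥1} g(χ*, ℓc*, m) ℓ^{−s} converges absolutely, and τ(χ*) · σ_{s−1}(m, conj(χ*)) = m^{s−1} · I(s, χ*, c*, m) · L(s, χ*), where L(s, χ*) = ∑_{n≥1} χ*(n) n^{−s}. -/

import Mathlib

/-!
Write `g(ℓ) = g(χ*, ℓc*, m)` and `S(k) = ∑_{u mod kc*} χ*(u) e(mu/(kc*))` for the complete sum
over all residues. Removing the condition `gcd(u, ℓ) = 1` by Möbius inversion gives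
`g = (χ* μ) ⋆ S` as Dirichlet convolution. Splitting `u = a + c* j`, the sum over `j` is a sum of
`k`-th roots of unity, so `S(k) = 0` unless `k ∣ m`, and then `S(k) = k · conj χ*(m/k) · τ(χ*)`
because `χ*` is primitive. Since `L(s, χ* μ) L(s, χ*) = 1`, `I(s) L(s, χ*) = ∑_{k ∣ m} S(k) k^{-s}`,
which is the claimed identity after `k ↦ m/k`.
-/

open scoped BigOperators

noncomputable def eC (x : ℝ) : ℂ := Complex.exp (2 * Real.pi * Complex.I * x)

/-- Gauss sum of the character modulo `c` induced by `χs` (defined modulo `cs`, with `cs ∣ c`). -/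
noncomputable def gSum {cs : ℕ} (χs : DirichletCharacter ℂ cs) (c : ℕ) (m : ℤ) : ℂ :=
  ∑ u ∈ (Finset.range c).filter fun u => Nat.Coprime u c,
    χs ((u : ℕ) : ZMod cs) * eC ((m : ℝ) * (u : ℝ) / (c : ℝ))

open Finset
open scoped ArithmeticFunction.Moebius LSeries.notation

theorem Finset.sum_range_mul {M : Type*} [AddCommMonoid M] (f : ℕ → M) (k n : ℕ) :
    ∑ v ∈ range (k * n), f v = ∑ j ∈ range k, ∑ a ∈ range n, f (a + n * j) := by
  induction k with
  | zero => simp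
  | succ k ih =>
    rw [add_mul, one_mul, sum_range_add, ih, sum_range_succ]
    simp only [add_comm, mul_comm]

theorem Finset.sum_range_filter_dvd {M : Type*} [AddCommMonoid M] (f : ℕ → M) {t N : ℕ}
    (ht : t ∣ N) : ∑ u ∈ range N with t ∣ u, f u = ∑ w ∈ range (N / t), f (t * w) := by
  obtain ⟨k, rfl⟩ := ht
  rcases Nat.eq_zero_or_pos t with rfl | ht
  · simp
  rw [Nat.mul_div_cancel_left k ht]
  refine (sum_nbij' (t * ·) (· / t) ?_ ?_ ?_ ?_ fun _ _ => rfl).symm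
  · intro w hw
    simpa [ht] using hw
  · rintro _ hu
    obtain ⟨hu, w, rfl⟩ := mem_filter.mp hu
    simpa [Nat.mul_div_cancel_left w ht, ht] using hu
  · intro w _
    simp [Nat.mul_div_cancel_left w ht]
  · rintro _ hu
    obtain ⟨-, w, rfl⟩ := mem_filter.mp hu
    simp [Nat.mul_div_cancel_left w ht]

theorem ZMod.sum_range_natCast {M : Type*} [AddCommMonoid M] {N : ℕ} [NeZero N]
    (f : ZMod N → M) : ∑ a ∈ range N, f a = ∑ x, f x :=
  sum_nbij' (fun a => a) ZMod.val (fun _ _ => mem_univ _)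
    (fun x _ => mem_range.mpr (ZMod.val_lt x)) (fun _ ha => ZMod.val_cast_of_lt (mem_range.mp ha))
    (fun x _ => ZMod.natCast_zmod_val x) fun _ _ => rfl

theorem sum_moebius_divisors_filter_dvd {n : ℕ} (hn : n ≠ 0) (u : ℕ) :
    ∑ t ∈ n.divisors with t ∣ u, μ t = if u.Coprime n then 1 else 0 := by
  have hdiv : {t ∈ n.divisors | t ∣ u} = (n.gcd u).divisors := by
    ext t
    simp [Nat.dvd_gcd_iff, hn, and_comm]
  rw [hdiv, ← ArithmeticFunction.coe_mul_zeta_apply, ArithmeticFunction.moebius_mul_coe_zeta,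
    ArithmeticFunction.one_apply, Nat.gcd_comm]

theorem sum_range_filter_coprime_eq_sum_moebius {R : Type*} [AddCommGroup R] (f : ℕ → R) {n N : ℕ}
    (hn : n ∣ N) :
    ∑ u ∈ range N with u.Coprime n, f u
      = ∑ t ∈ n.divisors, μ t • ∑ w ∈ range (N / t), f (t * w) := by
  rcases eq_or_ne n 0 with rfl | hn0
  · simp [Nat.eq_zero_of_zero_dvd hn]
  have hsieve : ∀ u, (if u.Coprime n then f u else 0)
      = ∑ t ∈ n.divisors, if t ∣ u then μ t • f u else 0 := by
    intro u
    rw [← sum_filter, ← sum_smul, sum_moebius_divisors_filter_dvd hn0]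
    split_ifs <;> simp
  rw [sum_filter, sum_congr rfl fun u _ => hsieve u, sum_comm]
  refine sum_congr rfl fun t ht => ?_
  rw [← sum_filter, ← smul_sum, sum_range_filter_dvd f ((Nat.dvd_of_mem_divisors ht).trans hn)]

theorem eC_add (x y : ℝ) : eC (x + y) = eC x * eC y := by
  rw [eC, eC, eC, ← Complex.exp_add]
  push_cast
  ring_nf

theorem eC_natCast_div (j N : ℕ) [NeZero N] : eC (j / N) = ZMod.stdAddChar (j : ZMod N) := by
  have h := ZMod.stdAddChar_coe (N := N) j
  push_cast at h
  rw [h, eC]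
  push_cast
  ring_nf

theorem sum_range_eC_mul_div (k : ℕ) [NeZero k] (m : ℕ) :
    ∑ j ∈ range k, eC (m * j / k) = if k ∣ m then (k : ℂ) else 0 := by
  have hterm : ∀ j : ℕ, eC (m * j / k) = ZMod.stdAddChar ((j : ZMod k) * (m : ZMod k)) := by
    intro j
    rw [← Nat.cast_mul, eC_natCast_div]
    push_cast
    ring_nf
  simp_rw [hterm]
  rw [ZMod.sum_range_natCast fun x => ZMod.stdAddChar (x * (m : ZMod k)),
    AddChar.sum_mulShift _ (ZMod.isPrimitive_stdAddChar k)]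
  simp only [ZMod.natCast_eq_zero_iff, ZMod.card]
  split_ifs <;> simp

theorem DirichletCharacter.coprime_of_apply_ne_zero {N : ℕ} {χ : DirichletCharacter ℂ N} {u : ℕ}
    (h : χ u ≠ 0) : u.Coprime N :=
  (ZMod.isUnit_iff_coprime u N).mp (MulChar.apply_ne_zero_iff.mp h)

noncomputable def fullGSum {N : ℕ} (χ : DirichletCharacter ℂ N) (c m : ℕ) : ℂ :=
  ∑ u ∈ range c, χ u * eC (m * u / c)

theorem gSum_self {N : ℕ} (χ : DirichletCharacter ℂ N) (m : ℕ) : gSum χ N m = fullGSum χ N m :=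
  sum_filter_of_ne fun _ _ hu =>
    DirichletCharacter.coprime_of_apply_ne_zero (left_ne_zero_of_mul hu)

section FullGSum

variable {N : ℕ} [NeZero N] (χ : DirichletCharacter ℂ N)

theorem fullGSum_eq_gaussSum (n : ℕ) :
    fullGSum χ N n = gaussSum χ (ZMod.stdAddChar.mulShift n) := by
  rw [fullGSum, gaussSum, ← ZMod.sum_range_natCast]
  refine sum_congr rfl fun u _ => ?_
  rw [AddChar.mulShift_apply, ← Nat.cast_mul, eC_natCast_div]
  push_cast
  ring_nf

theorem fullGSum_of_isPrimitive (hχ : χ.IsPrimitive) (n : ℕ) :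
    fullGSum χ N n = starRingEnd ℂ (χ n) * fullGSum χ N 1 := by
  rw [fullGSum_eq_gaussSum, fullGSum_eq_gaussSum, Nat.cast_one, AddChar.mulShift_one,
    gaussSum_mulShift_of_isPrimitive _ hχ, ← MulChar.star_apply']
  rfl

theorem fullGSum_mul_level {k : ℕ} (hk : k ≠ 0) (m : ℕ) :
    fullGSum χ (k * N) m = if k ∣ m then k * fullGSum χ N (m / k) else 0 := by
  have : NeZero k := ⟨hk⟩
  have hsplit : ∀ j a : ℕ, χ ↑(a + N * j) * eC (m * ↑(a + N * j) / ↑(k * N))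
      = χ a * eC (m * a / ↑(k * N)) * eC (m * j / k) := by
    intro j a
    have hN : (N : ℝ) ≠ 0 := Nat.cast_ne_zero.mpr (NeZero.ne N)
    have hk' : (k : ℝ) ≠ 0 := Nat.cast_ne_zero.mpr hk
    rw [mul_assoc, ← eC_add]
    congr 2
    · simp
    · push_cast
      field_simp
  rw [fullGSum, sum_range_mul, sum_comm]
  simp_rw [hsplit, ← mul_sum, ← sum_mul, sum_range_eC_mul_div]
  split_ifs with hdvd
  · obtain ⟨c, rfl⟩ := hdvd
    rw [Nat.mul_div_cancel_left c (Nat.pos_of_ne_zero hk), fullGSum, mul_comm]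
    congr 1
    refine sum_congr rfl fun a _ => ?_
    congr 2
    push_cast
    field_simp
  · rw [mul_zero]

end FullGSum

theorem gSum_mul_eq_sum_divisors {N : ℕ} (χ : DirichletCharacter ℂ N) (n m : ℕ) :
    gSum χ (n * N) m = ∑ t ∈ n.divisors, χ t * μ t * fullGSum χ (n / t * N) m := by
  have hcoprime : gSum χ (n * N) m
      = ∑ u ∈ range (n * N) with u.Coprime n, χ u * eC (m * u / ↑(n * N)) := by
    rw [gSum, Int.cast_natCast, sum_filter, sum_filter]
    refine sum_congr rfl fun u _ => ?_
    by_cases hu : χ u = 0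
    · simp [hu]
    · have hcop := DirichletCharacter.coprime_of_apply_ne_zero hu
      simp only [Nat.coprime_mul_iff_right, and_iff_left hcop]
  rw [hcoprime, sum_range_filter_coprime_eq_sum_moebius _ (dvd_mul_right n N)]
  refine sum_congr rfl fun t ht => ?_
  obtain ⟨q, rfl⟩ := Nat.dvd_of_mem_divisors ht
  have ht0 : 0 < t := Nat.pos_of_mem_divisors ht
  rw [Nat.mul_div_cancel_left q ht0, mul_assoc t q N, Nat.mul_div_cancel_left _ ht0, zsmul_eq_mul,
    mul_comm (χ t : ℂ), mul_assoc, fullGSum, mul_sum _ _ (χ t : ℂ)]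
  congr 1
  refine sum_congr rfl fun w _ => ?_
  have harg : (m : ℝ) * ↑(t * w) / ↑(t * (q * N)) = m * w / ↑(q * N) := by
    rw [Nat.cast_mul, Nat.cast_mul t, mul_left_comm, mul_div_mul_left _ _ (by positivity)]
  rw [harg, Nat.cast_mul, map_mul, mul_assoc]

theorem gSum_mul_level_eq_convolution {N : ℕ} (χ : DirichletCharacter ℂ N) (m : ℕ) :
    (fun n => gSum χ (n * N) m) = (↗χ * ↗μ) ⍟ fun k => fullGSum χ (k * N) m := by
  ext n
  simp only [LSeries.convolution_def, Pi.mul_apply]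
  rw [gSum_mul_eq_sum_divisors,
    Nat.sum_divisorsAntidiagonal fun a b => χ a * (μ a : ℂ) * fullGSum χ (b * N) m]

theorem LSeriesHasSum_sum_divisors {f : ℕ → ℂ} {m : ℕ} (hm : m ≠ 0) (hf : ∀ n, ¬ n ∣ m → f n = 0)
    (s : ℂ) : LSeriesHasSum f s (∑ k ∈ m.divisors, f k / k ^ s) := by
  have hterm : ∀ k ∉ m.divisors, LSeries.term f s k = 0 := by
    intro k hk
    rcases eq_or_ne k 0 with rfl | hk0
    · exact LSeries.term_zero f s
    · rw [LSeries.term_of_ne_zero hk0, hf k fun hdvd => hk (Nat.mem_divisors.mpr ⟨hdvd, hm⟩),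
        zero_div]
  have hsum : HasSum (LSeries.term f s) _ := hasSum_sum_of_ne_finset_zero hterm
  rwa [sum_congr rfl fun k hk => LSeries.term_of_ne_zero (Nat.pos_of_mem_divisors hk).ne' f s]
    at hsum

theorem LSeriesSummable.LSeries_eq_tsum_succ {f : ℕ → ℂ} {s : ℂ} (hf : LSeriesSummable f s) :
    LSeries f s = ∑' n : ℕ, f (n + 1) / ((n + 1 : ℕ) : ℂ) ^ s := by
  rw [LSeries, hf.tsum_eq_zero_add, LSeries.term_zero, zero_add]
  exact tsum_congr fun n => LSeries.term_of_ne_zero n.succ_ne_zero f s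

theorem LSeriesSummable.summable_succ {f : ℕ → ℂ} {s : ℂ} (hf : LSeriesSummable f s) :
    Summable fun n : ℕ => f (n + 1) / ((n + 1 : ℕ) : ℂ) ^ s :=
  ((summable_nat_add_iff 1).mpr hf).congr fun n => LSeries.term_of_ne_zero n.succ_ne_zero f s

theorem natCast_cpow_sub_one_mul_sum_divisors (a : ℕ → ℂ) (m : ℕ) (s : ℂ) :
    (m : ℂ) ^ (s - 1) * ∑ k ∈ m.divisors, k * a (m / k) / k ^ s
      = ∑ d ∈ m.divisors, a d * d ^ (s - 1) := by
  rw [← Nat.sum_div_divisors m fun d => a d * d ^ (s - 1), mul_sum]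
  refine sum_congr rfl fun k hk => ?_
  have hk0 : (k : ℂ) ≠ 0 := Nat.cast_ne_zero.mpr (Nat.pos_of_mem_divisors hk).ne'
  have hm : (m : ℂ) = k * ↑(m / k) := by
    rw [← Nat.cast_mul, Nat.mul_div_cancel' (Nat.dvd_of_mem_divisors hk)]
  have hks : (k : ℂ) ^ s ≠ 0 := Complex.cpow_ne_zero_iff.mpr (Or.inl hk0)
  rw [hm, Complex.natCast_mul_natCast_cpow, Complex.cpow_sub _ _ hk0, Complex.cpow_one]
  field_simp

section LSeries

variable {N : ℕ} [NeZero N] (χ : DirichletCharacter ℂ N) {m : ℕ}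

theorem LSeriesHasSum_fullGSum_mul_level (hm : m ≠ 0) (s : ℂ) :
    LSeriesHasSum (fun k => fullGSum χ (k * N) m) s
      (∑ k ∈ m.divisors, fullGSum χ (k * N) m / k ^ s) := by
  refine LSeriesHasSum_sum_divisors hm (fun k hk => ?_) s
  rcases eq_or_ne k 0 with rfl | hk0
  · simp [fullGSum]
  · rw [fullGSum_mul_level χ hk0, if_neg hk]

theorem LSeriesSummable_gSum_mul_level (hm : m ≠ 0) {s : ℂ} (hs : 1 < s.re) :
    LSeriesSummable (fun n => gSum χ (n * N) m) s := by
  rw [gSum_mul_level_eq_convolution]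
  exact (χ.LSeriesSummable_mul (ArithmeticFunction.LSeriesSummable_moebius_iff.mpr hs)).convolution
    (LSeriesHasSum_fullGSum_mul_level χ hm s).LSeriesSummable

theorem LSeries_gSum_mul_level_mul_LSeries (hm : m ≠ 0) {s : ℂ} (hs : 1 < s.re) :
    LSeries (fun n => gSum χ (n * N) m) s * LSeries ↗χ s
      = ∑ k ∈ m.divisors, fullGSum χ (k * N) m / k ^ s := by
  have hS := LSeriesHasSum_fullGSum_mul_level χ hm s
  rw [gSum_mul_level_eq_convolution, LSeries_convolution'
    (χ.LSeriesSummable_mul (ArithmeticFunction.LSeriesSummable_moebius_iff.mpr hs))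
    hS.LSeriesSummable, mul_right_comm, mul_comm (LSeries _ s),
    DirichletCharacter.LSeries.mul_mu_eq_one χ hs, one_mul, hS.LSeries_eq]

end LSeries

/-- The generating Dirichlet series `I(s,χ*,c*,m) = ∑_{ℓ≥1} g(χ*, ℓc*, m) ℓ^{-s}` of
non-primitive Gauss sums converges absolutely for `Re(s) > 1` and satisfies
`τ(χ*) σ_{s-1}(m, conj χ*) = m^{s-1} I(s,χ*,c*,m) L(s,χ*)`. -/
theorem gauss_sum_generating_series {cs : ℕ} (hcs : 0 < cs)
    (χs : DirichletCharacter ℂ cs) (hprim : χs.IsPrimitive)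
    (m : ℕ) (hm : 0 < m) (s : ℂ) (hs : 1 < s.re) :
    Summable (fun ℓ : ℕ => gSum χs ((ℓ + 1) * cs) (m : ℤ) / ((ℓ + 1 : ℕ) : ℂ) ^ s) ∧
    gSum χs cs 1 *
        ∑ d ∈ m.divisors, (starRingEnd ℂ) (χs ((d : ℕ) : ZMod cs)) * (d : ℂ) ^ (s - 1) =
      (m : ℂ) ^ (s - 1) *
        (∑' ℓ : ℕ, gSum χs ((ℓ + 1) * cs) (m : ℤ) / ((ℓ + 1 : ℕ) : ℂ) ^ s) *
        ∑' n : ℕ, χs ((n + 1 : ℕ) : ZMod cs) / ((n + 1 : ℕ) : ℂ) ^ s := by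
  have : NeZero cs := ⟨hcs.ne'⟩
  have hG := LSeriesSummable_gSum_mul_level χs hm.ne' hs
  refine ⟨hG.summable_succ, ?_⟩
  have hlevel : ∀ k ∈ m.divisors, fullGSum χs (k * cs) m / k ^ s
      = k * (starRingEnd ℂ (χs ↑(m / k)) * gSum χs cs 1) / k ^ s := by
    intro k hk
    rw [fullGSum_mul_level χs (Nat.pos_of_mem_divisors hk).ne', if_pos (Nat.dvd_of_mem_divisors hk),
      fullGSum_of_isPrimitive χs hprim, ← gSum_self, Nat.cast_one]
  rw [← hG.LSeries_eq_tsum_succ, ← (χs.LSeriesSummable_of_one_lt_re hs).LSeries_eq_tsum_succ,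
    mul_assoc, LSeries_gSum_mul_level_mul_LSeries χs hm.ne' hs, sum_congr rfl hlevel,
    natCast_cpow_sub_one_mul_sum_divisors fun d => starRingEnd ℂ (χs d) * gSum χs cs 1, mul_sum]
  exact sum_congr rfl fun d _ => by ring
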